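/- Within-attribute covariance of centered Horvitz–Thompson terms: for r ≠ r', Cov(B_{[a]}(r), B_{[a]}(r')) = −(n_{[a]}−1) π_{[a][a]}(r,r') S_{[a]}(r,r') / (n_{[a]}^2 π_{[a]}(r) π_{[a]}(r')), and Var(B_{[a]}(r)) = (n_{[a]}−1)(π_{[a]}(r) − π_{[a][a]}(r,r)) S_{[a]}^2(r) / (n_{[a]}^2 π_{[a]}^2(r)). -/

import Mathlib

/-! Each `B_{[a]}(r)` is a weighted sum of the indicators of the events `{R_i = r}`, `A_i = a`,
with weights `c_i = Y_i(r) - Ȳ_{[a]}(r)` summing to zero. Hence it is centred, and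
`Cov(B_{[a]}(r), B_{[a]}(r'))` is a double sum of `c_i d_j P(R_i = r, R_j = r')`. Off the diagonal
these probabilities all equal `π_{[a][a]}(r,r')`, and since the weights sum to zero the
off-diagonal part collapses to
`-π_{[a][a]}(r,r') Σ_i c_i d_i = -π_{[a][a]}(r,r') (n_{[a]}-1) S_{[a]}(r,r')`.
The diagonal probability `P(R_i = r, R_i = r')` is `0` for `r ≠ r'` and `π_{[a]}(r)` for `r = r'`. -/

open Finset MeasureTheory

variable {Ω : Type*} [MeasurableSpace Ω] {n H : ℕ} {𝓡 : Type*} [DecidableEq 𝓡]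

/-- Number of units with attribute `a`. -/
def nAttr (A : Fin n → Fin H) (a : Fin H) : ℕ := (univ.filter (fun i => A i = a)).card

/-- Subgroup average potential outcome `Ȳ_{[a]}(r)`. -/
noncomputable def subMean (A : Fin n → Fin H) (Y : Fin n → 𝓡 → ℝ) (a : Fin H) (r : 𝓡) : ℝ :=
  (nAttr A a : ℝ)⁻¹ * ∑ i ∈ univ.filter (fun i => A i = a), Y i r

/-- Finite population covariance `S_{[a]}(r,r')` with divisor `n_{[a]} − 1`
(of `Y_i(r)` and `Y_i(r')` among units with attribute `a`); taking `r' = r`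
gives the finite population variance `S²_{[a]}(r)`. -/
noncomputable def subCov (A : Fin n → Fin H) (Y : Fin n → 𝓡 → ℝ) (a : Fin H) (r r' : 𝓡) : ℝ :=
  ((nAttr A a : ℝ) - 1)⁻¹ *
    ∑ i ∈ univ.filter (fun i => A i = a),
      (Y i r - subMean A Y a r) * (Y i r' - subMean A Y a r')

/-- Centered Horvitz–Thompson term `B_{[a]}(r)`. -/
noncomputable def Bterm (A : Fin n → Fin H) (Y : Fin n → 𝓡 → ℝ) (R : Fin n → Ω → 𝓡)
    (π : Fin H → 𝓡 → ℝ) (a : Fin H) (r : 𝓡) (ω : Ω) : ℝ :=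
  ((nAttr A a : ℝ) * π a r)⁻¹ *
    ∑ i ∈ univ.filter (fun i => A i = a),
      (if R i ω = r then Y i r - subMean A Y a r else 0)

/-- Covariance `Cov(X,Z) = E[XZ] − E[X]E[Z]`. -/
noncomputable def covar (μ : Measure Ω) (X Z : Ω → ℝ) : ℝ :=
  (∫ ω, X ω * Z ω ∂μ) - (∫ ω, X ω ∂μ) * (∫ ω, Z ω ∂μ)

section IndicatorSums

variable {ι κ : Type*} {μ : Measure Ω} [IsFiniteMeasure μ]
  {s : Finset ι} {t : Finset κ} {E : ι → Set Ω} {F : κ → Set Ω}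

theorem integral_sum_indicator_const (hE : ∀ i ∈ s, MeasurableSet (E i)) (c : ι → ℝ) :
    ∫ ω, ∑ i ∈ s, (E i).indicator (fun _ => c i) ω ∂μ = ∑ i ∈ s, μ.real (E i) * c i := by
  rw [integral_finsetSum s fun i hi => (integrable_const (c i)).indicator (hE i hi)]
  exact sum_congr rfl fun i hi => by rw [integral_indicator_const _ (hE i hi), smul_eq_mul]

theorem integral_sum_indicator_mul_sum_indicator (hE : ∀ i ∈ s, MeasurableSet (E i))
    (hF : ∀ j ∈ t, MeasurableSet (F j)) (c : ι → ℝ) (d : κ → ℝ) :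
    ∫ ω, (∑ i ∈ s, (E i).indicator (fun _ => c i) ω) *
        ∑ j ∈ t, (F j).indicator (fun _ => d j) ω ∂μ =
      ∑ i ∈ s, ∑ j ∈ t, μ.real (E i ∩ F j) * (c i * d j) := by
  simp_rw [sum_mul_sum, ← Set.inter_indicator_mul, ← sum_product']
  exact integral_sum_indicator_const (fun p hp => (hE p.1 (mem_product.1 hp).1).inter
    (hF p.2 (mem_product.1 hp).2)) fun p => c p.1 * d p.2

end IndicatorSums

theorem sum_sum_mul_mul_eq_diag_of_sum_eq_zero {ι R : Type*} [CommRing R] {s : Finset ι}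
    {c d : ι → R} {w : ι → ι → R} {p q : R} (hd : ∑ j ∈ s, d j = 0)
    (hdiag : ∀ i ∈ s, w i i = q) (hoff : ∀ i ∈ s, ∀ j ∈ s, i ≠ j → w i j = p) :
    ∑ i ∈ s, ∑ j ∈ s, w i j * (c i * d j) = (q - p) * ∑ i ∈ s, c i * d i := by
  classical
  have hw : ∀ i ∈ s, ∀ j ∈ s, w i j = p + if i = j then q - p else 0 := by
    intro i hi j hj
    split_ifs with hij
    · rw [← hij, hdiag i hi]; ring
    · rw [hoff i hi j hj hij, add_zero]
  rw [Finset.mul_sum]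
  refine sum_congr rfl fun i hi => ?_
  calc ∑ j ∈ s, w i j * (c i * d j)
      = p * c i * ∑ j ∈ s, d j + ∑ j ∈ s, if i = j then (q - p) * (c i * d j) else 0 := by
        rw [Finset.mul_sum, ← sum_add_distrib]
        refine sum_congr rfl fun j hj => ?_
        rw [hw i hi j hj]; split_ifs <;> ring
    _ = (q - p) * (c i * d i) := by rw [hd, sum_ite_eq, if_pos hi]; ring

section HorvitzThompson

variable (A : Fin n → Fin H) (Y : Fin n → 𝓡 → ℝ) (a : Fin H)

omit [DecidableEq 𝓡] in
theorem sum_sub_subMean (r : 𝓡) :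
    ∑ i ∈ univ.filter (fun i => A i = a), (Y i r - subMean A Y a r) = 0 := by
  rcases Nat.eq_zero_or_pos (nAttr A a) with h | h
  · rw [card_eq_zero.mp h, sum_empty]
  · rw [sum_sub_distrib, sum_const, nsmul_eq_mul, subMean, ← nAttr,
      mul_inv_cancel_left₀ (Nat.cast_ne_zero.mpr h.ne'), sub_self]

omit [DecidableEq 𝓡] in
/-- For `nAttr A a = 1` the factor `(n - 1)⁻¹` in `subCov` is `0⁻¹ = 0`; the identity survives
because a single centred unit contributes `0`. -/
theorem sub_one_mul_subCov (r r' : 𝓡) :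
    ((nAttr A a : ℝ) - 1) * subCov A Y a r r' =
      ∑ i ∈ univ.filter (fun i => A i = a),
        (Y i r - subMean A Y a r) * (Y i r' - subMean A Y a r') := by
  rcases eq_or_ne (nAttr A a : ℝ) 1 with h | h
  · obtain ⟨i, hi⟩ := card_eq_one.mp (Nat.cast_eq_one.mp h)
    have hmean : ∀ t, subMean A Y a t = Y i t := fun t => by simp [subMean, nAttr, hi]
    simp [h, hi, hmean]
  · rw [subCov, mul_inv_cancel_left₀ (sub_ne_zero.mpr h)]

variable (μ : Measure Ω) [IsFiniteMeasure μ] (R : Fin n → Ω → 𝓡) (π : Fin H → 𝓡 → ℝ)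

omit [MeasurableSpace Ω] in
theorem Bterm_eq_sum_indicator (r : 𝓡) (ω : Ω) :
    Bterm A Y R π a r ω = ((nAttr A a : ℝ) * π a r)⁻¹ *
      ∑ i ∈ univ.filter (fun i => A i = a),
        {ω | R i ω = r}.indicator (fun _ => Y i r - subMean A Y a r) ω := by
  simp only [Bterm, Set.indicator_apply, Set.mem_ofPred_eq]

theorem integral_Bterm (hmeas : ∀ (i : Fin n) (t : 𝓡), MeasurableSet {ω | R i ω = t})
    (hmarg : ∀ (i : Fin n) (t : 𝓡), (μ {ω | R i ω = t}).toReal = π (A i) t) (r : 𝓡) :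
    ∫ ω, Bterm A Y R π a r ω ∂μ = 0 := by
  simp_rw [Bterm_eq_sum_indicator]
  rw [integral_const_mul, integral_sum_indicator_const (fun i _ => hmeas i r)]
  have hπ : ∀ i ∈ univ.filter (fun i => A i = a), μ.real {ω | R i ω = r} = π a r :=
    fun i hi => (mem_filter.mp hi).2 ▸ hmarg i r
  rw [sum_congr rfl fun i hi => by rw [hπ i hi], ← Finset.mul_sum, sum_sub_subMean,
    mul_zero, mul_zero]

theorem integral_Bterm_mul_Bterm
    (hmeas : ∀ (i : Fin n) (t : 𝓡), MeasurableSet {ω | R i ω = t})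
    (π2 : Fin H → Fin H → 𝓡 → 𝓡 → ℝ)
    (hjoint : ∀ (i j : Fin n), i ≠ j → ∀ (t t' : 𝓡),
      (μ {ω | R i ω = t ∧ R j ω = t'}).toReal = π2 (A i) (A j) t t')
    {r r' : 𝓡} {q : ℝ}
    (hdiag : ∀ i, A i = a → μ.real ({ω | R i ω = r} ∩ {ω | R i ω = r'}) = q) :
    ∫ ω, Bterm A Y R π a r ω * Bterm A Y R π a r' ω ∂μ =
      ((nAttr A a : ℝ) * π a r)⁻¹ * ((nAttr A a : ℝ) * π a r')⁻¹ *
        ((q - π2 a a r r') * (((nAttr A a : ℝ) - 1) * subCov A Y a r r')) := by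
  simp_rw [Bterm_eq_sum_indicator, mul_mul_mul_comm _ (Finset.sum _ _)]
  rw [integral_const_mul, integral_sum_indicator_mul_sum_indicator (fun i _ => hmeas i r)
      (fun i _ => hmeas i r'), sum_sum_mul_mul_eq_diag_of_sum_eq_zero (sum_sub_subMean A Y a r'),
      sub_one_mul_subCov]
  · exact fun i hi => hdiag i (mem_filter.mp hi).2
  · intro i hi j hj hij
    have hij' := hjoint i j hij r r'
    rw [(mem_filter.mp hi).2, (mem_filter.mp hj).2] at hij'
    exact hij'

theorem covar_Bterm (hmeas : ∀ (i : Fin n) (t : 𝓡), MeasurableSet {ω | R i ω = t})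
    (π2 : Fin H → Fin H → 𝓡 → 𝓡 → ℝ)
    (hmarg : ∀ (i : Fin n) (t : 𝓡), (μ {ω | R i ω = t}).toReal = π (A i) t)
    (hjoint : ∀ (i j : Fin n), i ≠ j → ∀ (t t' : 𝓡),
      (μ {ω | R i ω = t ∧ R j ω = t'}).toReal = π2 (A i) (A j) t t')
    {r r' : 𝓡} {q : ℝ}
    (hdiag : ∀ i, A i = a → μ.real ({ω | R i ω = r} ∩ {ω | R i ω = r'}) = q) :
    covar μ (Bterm A Y R π a r) (Bterm A Y R π a r') =
      ((nAttr A a : ℝ) * π a r)⁻¹ * ((nAttr A a : ℝ) * π a r')⁻¹ *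
        ((q - π2 a a r r') * (((nAttr A a : ℝ) - 1) * subCov A Y a r r')) := by
  rw [covar, integral_Bterm A Y a μ R π hmeas hmarg, zero_mul, sub_zero,
    integral_Bterm_mul_Bterm A Y a μ R π hmeas π2 hjoint hdiag]

end HorvitzThompson

theorem cov_Bterms_within_attr_general
    (μ : Measure Ω) [IsProbabilityMeasure μ]
    (A : Fin n → Fin H) (Y : Fin n → 𝓡 → ℝ) (R : Fin n → Ω → 𝓡)
    (hmeas : ∀ (i : Fin n) (t : 𝓡), MeasurableSet {ω | R i ω = t})
    (π : Fin H → 𝓡 → ℝ)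
    (π2 : Fin H → Fin H → 𝓡 → 𝓡 → ℝ)
    (hmarg : ∀ (i : Fin n) (t : 𝓡), (μ {ω | R i ω = t}).toReal = π (A i) t)
    (hjoint : ∀ (i j : Fin n), i ≠ j → ∀ (t t' : 𝓡),
      (μ {ω | R i ω = t ∧ R j ω = t'}).toReal = π2 (A i) (A j) t t')
    (a : Fin H) (r r' : 𝓡) :
    (r ≠ r' →
      covar μ (Bterm A Y R π a r) (Bterm A Y R π a r') =
        -(((nAttr A a : ℝ) - 1) * π2 a a r r' * subCov A Y a r r') /
          ((nAttr A a : ℝ) ^ 2 * π a r * π a r')) ∧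
    covar μ (Bterm A Y R π a r) (Bterm A Y R π a r) =
      ((nAttr A a : ℝ) - 1) * (π a r - π2 a a r r) * subCov A Y a r r /
        ((nAttr A a : ℝ) ^ 2 * (π a r) ^ 2) := by
  refine ⟨fun hne => ?_, ?_⟩
  · have hdisj : ∀ i, A i = a → μ.real ({ω | R i ω = r} ∩ {ω | R i ω = r'}) = 0 :=
      fun i _ => by
        rw [(Set.disjoint_left.2 fun ω h h' => hne (h.symm.trans h')).inter_eq,
          measureReal_empty]
    rw [covar_Bterm A Y a μ R π hmeas π2 hmarg hjoint hdisj]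
    ring
  · rw [covar_Bterm A Y a μ R π hmeas π2 hmarg hjoint (q := π a r) fun i hi => by
      rw [Set.inter_self, ← hi]; exact hmarg i r]
    ring

/-- Within-attribute covariance of centered Horvitz–Thompson terms: for `r ≠ r'`,
`Cov(B_{[a]}(r), B_{[a]}(r')) = −(n_{[a]}−1) π_{[a][a]}(r,r') S_{[a]}(r,r') /
  (n_{[a]}² π_{[a]}(r) π_{[a]}(r'))`, and
`Var(B_{[a]}(r)) = (n_{[a]}−1)(π_{[a]}(r) − π_{[a][a]}(r,r)) S²_{[a]}(r) /
  (n_{[a]}² π_{[a]}(r)²)`. -/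
theorem cov_Bterms_within_attr
    (μ : Measure Ω) [IsProbabilityMeasure μ]
    (A : Fin n → Fin H) (Y : Fin n → 𝓡 → ℝ) (R : Fin n → Ω → 𝓡)
    (hmeas : ∀ (i : Fin n) (t : 𝓡), MeasurableSet {ω | R i ω = t})
    (π : Fin H → 𝓡 → ℝ) (hπ : ∀ a t, 0 < π a t)
    (π2 : Fin H → Fin H → 𝓡 → 𝓡 → ℝ)
    (hmarg : ∀ (i : Fin n) (t : 𝓡), (μ {ω | R i ω = t}).toReal = π (A i) t)
    (hjoint : ∀ (i j : Fin n), i ≠ j → ∀ (t t' : 𝓡),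
      (μ {ω | R i ω = t ∧ R j ω = t'}).toReal = π2 (A i) (A j) t t')
    (a : Fin H) (r r' : 𝓡) :
    (r ≠ r' →
      covar μ (Bterm A Y R π a r) (Bterm A Y R π a r') =
        -(((nAttr A a : ℝ) - 1) * π2 a a r r' * subCov A Y a r r') /
          ((nAttr A a : ℝ) ^ 2 * π a r * π a r')) ∧
    covar μ (Bterm A Y R π a r) (Bterm A Y R π a r) =
      ((nAttr A a : ℝ) - 1) * (π a r - π2 a a r r) * subCov A Y a r r /
        ((nAttr A a : ℝ) ^ 2 * (π a r) ^ 2) :=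
  cov_Bterms_within_attr_general μ A Y R hmeas π π2 hmarg hjoint a r r'
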